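/- arXiv:2008.08843 — 4 statements merged into one kernel-verified Lean document; each statement's English description precedes it below -/
import Mathlib

section
/- Let $x, y \in \mathbb{R}^d$ with $y \in x + C_j$, where $C_j = \{ re : e \in B(\xi_j, 1/2) \cap S^{d-1},\ r > 0 \}$ is an open cone around the half-line through a unit vector $\xi_j$. Then $\bar{B}(x, |x-y|) \cap (x + C_j) \subset B(y, |x-y|)$. -/
/-!
Two unit vectors within `1/2` of `ξ` are within `1` of each other, so the angle at `x` between
`y - x` and `z - x` is less than `π / 3`. By the law of cosines,
`‖z - y‖² < ‖z - x‖² - ‖z - x‖ ‖y - x‖ + ‖y - x‖² ≤ ‖y - x‖²` once `‖z - x‖ ≤ ‖y - x‖`.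
-/

open Metric

open scoped RealInnerProductSpace

section InnerProductSpace

variable {E : Type*} [NormedAddCommGroup E] [InnerProductSpace ℝ E]

theorem one_lt_two_mul_inner_of_norm_sub_lt_one {e f : E} (he : ‖e‖ = 1) (hf : ‖f‖ = 1)
    (hfe : ‖f - e‖ < 1) : 1 < 2 * ⟪f, e⟫ := by
  have hsq : ‖f - e‖ ^ 2 < 1 := by nlinarith [norm_nonneg (f - e)]
  rw [norm_sub_sq_real, he, hf] at hsq
  linarith

theorem norm_smul_mul_norm_smul_lt_two_mul_inner {e f : E} {r s : ℝ} (hr : 0 < r) (hs : 0 < s)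
    (he : ‖e‖ = 1) (hf : ‖f‖ = 1) (hfe : ‖f - e‖ < 1) :
    ‖s • f‖ * ‖r • e‖ < 2 * ⟪s • f, r • e⟫ := by
  have h := one_lt_two_mul_inner_of_norm_sub_lt_one he hf hfe
  rw [norm_smul, norm_smul, hf, he, Real.norm_of_nonneg hr.le, Real.norm_of_nonneg hs.le,
    real_inner_smul_left, real_inner_smul_right]
  nlinarith [mul_pos hs hr]

/-- `hangle` says that the angle between `u` and `v` is less than `π / 3`. -/
theorem norm_sub_lt_norm_of_norm_le {u v : E} (huv : ‖u‖ ≤ ‖v‖)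
    (hangle : ‖u‖ * ‖v‖ < 2 * ⟪u, v⟫) : ‖u - v‖ < ‖v‖ := by
  have hsq : ‖u - v‖ ^ 2 < ‖v‖ ^ 2 := by
    calc ‖u - v‖ ^ 2 = ‖u‖ ^ 2 - 2 * ⟪u, v⟫ + ‖v‖ ^ 2 := norm_sub_sq_real u v
      _ < ‖u‖ * (‖u‖ - ‖v‖) + ‖v‖ ^ 2 := by linarith
      _ ≤ ‖v‖ ^ 2 := by nlinarith [norm_nonneg u]
  exact lt_of_pow_lt_pow_left₀ 2 (norm_nonneg v) hsq

end InnerProductSpace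

theorem closedBall_inter_cone_subset_general (d : ℕ) (ξ x y : EuclideanSpace ℝ (Fin d))
    (C : Set (EuclideanSpace ℝ (Fin d)))
    (hC : C = {z | ∃ r : ℝ, 0 < r ∧ ∃ e, ‖e‖ = 1 ∧ ‖e - ξ‖ < 1/2 ∧ z = r • e})
    (hy : y - x ∈ C) :
    ∀ z ∈ closedBall x (dist x y), z - x ∈ C → z ∈ ball y (dist x y) := by
  subst hC
  intro z hz hzC
  obtain ⟨r, hr, e, he, heξ, hyx⟩ := hy
  obtain ⟨s, hs, f, hf, hfξ, hzx⟩ := hzC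
  have hfe : ‖f - e‖ < 1 := by
    calc ‖f - e‖ = dist f e := (dist_eq_norm f e).symm
      _ ≤ dist f ξ + dist e ξ := dist_triangle_right f e ξ
      _ < 1 := by rw [dist_eq_norm, dist_eq_norm]; linarith
  have hangle : ‖z - x‖ * ‖y - x‖ < 2 * ⟪z - x, y - x⟫ := by
    rw [hyx, hzx]
    exact norm_smul_mul_norm_smul_lt_two_mul_inner hr hs he hf hfe
  rw [mem_closedBall, dist_eq_norm, dist_comm, dist_eq_norm] at hz
  rw [mem_ball, dist_eq_norm, dist_comm, dist_eq_norm, ← sub_sub_sub_cancel_right z y x]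
  exact norm_sub_lt_norm_of_norm_le hz hangle

/-- Let `C` be the open cone of positive multiples of unit vectors within
distance `1/2` of the unit vector `ξ`. If `y ∈ x + C`, then
`closedBall x ‖x-y‖ ∩ (x + C) ⊆ ball y ‖x-y‖`. -/
theorem closedBall_inter_cone_subset (d : ℕ) (ξ x y : EuclideanSpace ℝ (Fin d))
    (hξ : ‖ξ‖ = 1)
    (C : Set (EuclideanSpace ℝ (Fin d)))
    (hC : C = {z | ∃ r : ℝ, 0 < r ∧ ∃ e, ‖e‖ = 1 ∧ ‖e - ξ‖ < 1/2 ∧ z = r • e})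
    (hy : y - x ∈ C) :
    ∀ z ∈ closedBall x (dist x y), z - x ∈ C → z ∈ ball y (dist x y) :=
  closedBall_inter_cone_subset_general d ξ x y C hC hy
end

section
/- Let $P \subset \mathbb{R}^d$ be a finite set with at least 2 points, and let $\xi_1,\dots,\xi_p \in S^{d-1}$ be a maximal $1/4$-separated set, with associated open cones $C_j = \{re : e \in B(\xi_j,1/2)\cap S^{d-1}, r>0\}$. Define an edge set $\mathcal{E}$ by: for each $p_0 \in P$ and each $1 \le j \le p$ with $P \cap (p_0 + C_j) \setminus \{p_0\} \neq \emptyset$, add one edge from $p_0$ to a nearest point of $P \cap (p_0 + C_j)$. Then for every pair of distinct points $s, t \in P$, there exists a connected union of edges in $\mathcal{E}$ containing both $s$ and $t$ and contained in the closed ball $\bar{B}(t, |s - t|)$. -/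
/-!
For `p ≠ t` in `P`, the direction of `t - p` lies within `1/4` of some `ξ ∈ S`, so `t` lies in
the cone `p + C_ξ` and there is an edge from `p` to a nearest point `q` of that cone. Two vectors
of one cone make an angle below `π / 3`, so `|q - p| ≤ |t - p|` forces `|q - t| < |p - t|`.
Following such edges from `s` strictly decreases the distance to `t`; as `P` is finite the walk
reaches `t`, and every edge it uses lies in the ball around `t` through its starting point.
-/

open Metric

section EdgePaths

variable {E : Type*} [NormedAddCommGroup E] [NormedSpace ℝ E]

def JoinedByEdgesWithin (ℰ : Set (E × E)) (K : Set E) (a b : E) : Prop :=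
  ∃ F : Finset (E × E), ↑F ⊆ ℰ ∧ IsConnected (⋃ e ∈ F, segment ℝ e.1 e.2) ∧
    a ∈ ⋃ e ∈ F, segment ℝ e.1 e.2 ∧ b ∈ ⋃ e ∈ F, segment ℝ e.1 e.2 ∧
    (⋃ e ∈ F, segment ℝ e.1 e.2) ⊆ K

variable {ℰ : Set (E × E)} {K : Set E} {p q t : E}

theorem joinedByEdgesWithin_of_mem (hpq : (p, q) ∈ ℰ) (hK : segment ℝ p q ⊆ K) :
    JoinedByEdgesWithin ℰ K p q := by
  refine ⟨{(p, q)}, by simpa using hpq, ?_, ?_, ?_, ?_⟩ <;>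
    simp only [Finset.set_biUnion_singleton]
  exacts [(convex_segment p q).isConnected ⟨p, left_mem_segment ℝ p q⟩,
    left_mem_segment ℝ p q, right_mem_segment ℝ p q, hK]

theorem JoinedByEdgesWithin.cons (hpq : (p, q) ∈ ℰ) (hK : segment ℝ p q ⊆ K)
    (h : JoinedByEdgesWithin ℰ K q t) : JoinedByEdgesWithin ℰ K p t := by
  obtain ⟨F, hFℰ, hconn, hq, ht, hFK⟩ := h
  classical
  refine ⟨insert (p, q) F, ?_, ?_, ?_, ?_, ?_⟩ <;>
    simp only [Finset.coe_insert, Finset.set_biUnion_insert]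
  · exact Set.insert_subset hpq hFℰ
  · exact ((convex_segment p q).isConnected ⟨p, left_mem_segment ℝ p q⟩).union
      ⟨q, right_mem_segment ℝ p q, hq⟩ hconn
  · exact Or.inl (left_mem_segment ℝ p q)
  · exact Or.inr ht
  · exact Set.union_subset hK hFK

theorem JoinedByEdgesWithin.mono {K' : Set E} (h : JoinedByEdgesWithin ℰ K p t)
    (hKK' : K ⊆ K') :
    JoinedByEdgesWithin ℰ K' p t :=
  let ⟨F, hFℰ, hconn, hp, ht, hFK⟩ := h
  ⟨F, hFℰ, hconn, hp, ht, hFK.trans hKK'⟩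

theorem joinedByEdgesWithin_closedBall_of_exists_closer {P : Set E} (hP : P.Finite)
    (hcloser : ∀ p ∈ P, p ≠ t → ∃ q ∈ P, (p, q) ∈ ℰ ∧ dist q t < dist p t)
    (hp : p ∈ P) (hpt : p ≠ t) : JoinedByEdgesWithin ℰ (closedBall t (dist p t)) p t := by
  have hwf : P.WellFoundedOn (Function.onFun (· < ·) (dist · t)) :=
    Set.wellFoundedOn_image.1 (hP.image _).wellFoundedOn
  refine hwf.induction hp
    (P := fun p => p ≠ t → JoinedByEdgesWithin ℰ (closedBall t (dist p t)) p t)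
    (fun p hp ih hpt => ?_) hpt
  obtain ⟨q, hq, hpq, hqt⟩ := hcloser p hp hpt
  have hseg : segment ℝ p q ⊆ closedBall t (dist p t) :=
    (convex_closedBall t _).segment_subset (mem_closedBall.2 le_rfl) (mem_closedBall.2 hqt.le)
  rcases eq_or_ne q t with rfl | hqt'
  · exact joinedByEdgesWithin_of_mem hpq hseg
  · exact ((ih q hq hqt hqt').mono (closedBall_subset_closedBall hqt.le)).cons hpq hseg

end EdgePaths

section Cones

variable {E : Type*} [NormedAddCommGroup E] [InnerProductSpace ℝ E]

def openCone (ξ : E) : Set E :=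
  {z | ∃ r : ℝ, 0 < r ∧ ∃ e, ‖e‖ = 1 ∧ ‖e - ξ‖ < 1/2 ∧ z = r • e}

theorem norm_smul_sub_smul_lt {e f : E} (he : ‖e‖ = 1) (hf : ‖f‖ = 1) (hef : ‖e - f‖ < 1)
    {r s : ℝ} (hr : 0 < r) (hrs : r ≤ s) : ‖s • f - r • e‖ < s := by
  have hs : 0 < s := hr.trans_le hrs
  have hinner : 1 / 2 < inner ℝ e f := by
    have := norm_sub_sq_real e f
    rw [he, hf] at this
    nlinarith [norm_nonneg (e - f)]
  refine lt_of_pow_lt_pow_left₀ 2 hs.le ?_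
  calc ‖s • f - r • e‖ ^ 2 = s ^ 2 - 2 * (s * r) * inner ℝ e f + r ^ 2 := by
        rw [norm_sub_sq_real, norm_smul, norm_smul, real_inner_smul_left, real_inner_smul_right,
          real_inner_comm, he, hf, Real.norm_of_nonneg hs.le, Real.norm_of_nonneg hr.le]
        ring
    _ < s ^ 2 := by nlinarith [mul_pos hs hr]

theorem mem_openCone_of_norm_sub_lt {x ξ : E} (hx : x ≠ 0) (hxξ : ‖‖x‖⁻¹ • x - ξ‖ < 1/2) :
    x ∈ openCone ξ := by
  have hx' : ‖x‖ ≠ 0 := norm_ne_zero_iff.2 hx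
  refine ⟨‖x‖, norm_pos_iff.2 hx, ‖x‖⁻¹ • x, ?_, hxξ, ?_⟩
  · rw [norm_smul, norm_inv, norm_norm, inv_mul_cancel₀ hx']
  · rw [smul_smul, mul_inv_cancel₀ hx', one_smul]

theorem norm_sub_lt_of_mem_openCone {x y ξ : E} (hx : x ∈ openCone ξ) (hy : y ∈ openCone ξ)
    (hyx : ‖y‖ ≤ ‖x‖) : ‖x - y‖ < ‖x‖ := by
  obtain ⟨s, hs, f, hf, hfξ, rfl⟩ := hx
  obtain ⟨r, hr, e, he, heξ, rfl⟩ := hy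
  have hef : ‖e - f‖ < 1 := by
    calc ‖e - f‖ ≤ ‖e - ξ‖ + ‖ξ - f‖ := norm_sub_le_norm_sub_add_norm_sub ..
      _ < 1 := by rw [norm_sub_rev ξ]; linarith
  simp only [norm_smul, he, hf, Real.norm_of_nonneg hs.le, Real.norm_of_nonneg hr.le,
    mul_one] at hyx ⊢
  exact norm_smul_sub_smul_lt he hf hef hr hyx

theorem exists_edge_dist_lt {P S : Set E} {ℰ : Set (E × E)}
    (hcover : ∀ v ∈ sphere (0 : E) 1, ∃ ξ ∈ S, dist v ξ < 1/2)
    (hℰ : ∀ p ∈ P, ∀ ξ ∈ S, (P ∩ (fun z => p + z) '' openCone ξ).Nonempty →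
      ∃ q ∈ P ∩ (fun z => p + z) '' openCone ξ, (p, q) ∈ ℰ ∧
        ∀ q' ∈ P ∩ (fun z => p + z) '' openCone ξ, dist p q ≤ dist p q')
    {p t : E} (hp : p ∈ P) (ht : t ∈ P) (hpt : p ≠ t) :
    ∃ q ∈ P, (p, q) ∈ ℰ ∧ dist q t < dist p t := by
  have hx : t - p ≠ 0 := sub_ne_zero.2 hpt.symm
  obtain ⟨ξ, hξ, hxξ⟩ := hcover (‖t - p‖⁻¹ • (t - p)) (by
    rw [mem_sphere_zero_iff_norm, norm_smul, norm_inv, norm_norm,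
      inv_mul_cancel₀ (norm_ne_zero_iff.2 hx)])
  have hxC : t - p ∈ openCone ξ :=
    mem_openCone_of_norm_sub_lt hx (by rw [← dist_eq_norm]; linarith)
  have htC : t ∈ P ∩ (fun z => p + z) '' openCone ξ := ⟨ht, t - p, hxC, add_sub_cancel p t⟩
  obtain ⟨_, ⟨hqP, y, hyC, rfl⟩, hpq, hmin⟩ := hℰ p hp ξ hξ ⟨t, htC⟩
  refine ⟨p + y, hqP, hpq, ?_⟩
  have hyx : ‖y‖ ≤ ‖t - p‖ := by simpa [dist_eq_norm'] using hmin t htC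
  calc dist (p + y) t = ‖t - p - y‖ := by rw [dist_comm, dist_eq_norm, sub_add_eq_sub_sub]
    _ < ‖t - p‖ := norm_sub_lt_of_mem_openCone hxC hyC hyx
    _ = dist p t := (dist_eq_norm' p t).symm

end Cones

theorem spanning_graph_connects_general (d : ℕ) (P : Set (EuclideanSpace ℝ (Fin d)))
    (hPfin : P.Finite)
    (S : Set (EuclideanSpace ℝ (Fin d)))
    (hmax : ∀ v ∈ sphere (0 : EuclideanSpace ℝ (Fin d)) 1, ∃ ξ ∈ S, dist v ξ < 1/4)
    (Cone : EuclideanSpace ℝ (Fin d) → Set (EuclideanSpace ℝ (Fin d)))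
    (hCone : ∀ ξ, Cone ξ = {z | ∃ r : ℝ, 0 < r ∧ ∃ e, ‖e‖ = 1 ∧ ‖e - ξ‖ < 1/2 ∧ z = r • e})
    (ℰ : Set (EuclideanSpace ℝ (Fin d) × EuclideanSpace ℝ (Fin d)))
    (hE : ∀ p ∈ P, ∀ ξ ∈ S, (P ∩ (fun z => p + z) '' Cone ξ).Nonempty →
      ∃ q ∈ P ∩ (fun z => p + z) '' Cone ξ, (p, q) ∈ ℰ ∧
        ∀ q' ∈ P ∩ (fun z => p + z) '' Cone ξ, dist p q ≤ dist p q')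
    (s t : EuclideanSpace ℝ (Fin d)) (hs : s ∈ P) (ht : t ∈ P) (hst : s ≠ t) :
    ∃ F : Finset (EuclideanSpace ℝ (Fin d) × EuclideanSpace ℝ (Fin d)),
      ↑F ⊆ ℰ ∧
      IsConnected (⋃ e ∈ F, segment ℝ e.1 e.2) ∧
      s ∈ ⋃ e ∈ F, segment ℝ e.1 e.2 ∧
      t ∈ ⋃ e ∈ F, segment ℝ e.1 e.2 ∧
      (⋃ e ∈ F, segment ℝ e.1 e.2) ⊆ closedBall t (dist s t) := by
  obtain rfl : Cone = openCone := funext hCone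
  have hcover : ∀ v ∈ sphere (0 : EuclideanSpace ℝ (Fin d)) 1, ∃ ξ ∈ S, dist v ξ < 1/2 :=
    fun v hv => (hmax v hv).imp fun _ ⟨hξ, hvξ⟩ => ⟨hξ, hvξ.trans (by norm_num)⟩
  exact joinedByEdgesWithin_closedBall_of_exists_closer hPfin
    (fun p hp hpt => exists_edge_dist_lt hcover hE hp ht hpt) hs hst

/-- Let `P ⊆ ℝ^d` be a finite set with at least two points, `S` a maximal
`1/4`-separated set of unit vectors with cones `C_ξ = {re : e ∈ B(ξ,1/2) ∩ S^{d-1}, r > 0}`,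
and let `ℰ` be an edge set containing, for each `p ∈ P` and each `ξ ∈ S` for which
`P ∩ (p + C_ξ)` is nonempty, an edge from `p` to a nearest point of `P ∩ (p + C_ξ)`.
Then any two distinct points `s, t ∈ P` are joined by a connected union of edges of `ℰ`
contained in the closed ball `closedBall t (dist s t)`. -/
theorem spanning_graph_connects (d : ℕ) (P : Set (EuclideanSpace ℝ (Fin d)))
    (hPfin : P.Finite) (hP2 : 2 ≤ P.ncard)
    (S : Set (EuclideanSpace ℝ (Fin d)))
    (hS : S ⊆ sphere (0 : EuclideanSpace ℝ (Fin d)) 1)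
    (hsep : S.Pairwise fun a b => 1/4 ≤ dist a b)
    (hmax : ∀ v ∈ sphere (0 : EuclideanSpace ℝ (Fin d)) 1, ∃ ξ ∈ S, dist v ξ < 1/4)
    (Cone : EuclideanSpace ℝ (Fin d) → Set (EuclideanSpace ℝ (Fin d)))
    (hCone : ∀ ξ, Cone ξ = {z | ∃ r : ℝ, 0 < r ∧ ∃ e, ‖e‖ = 1 ∧ ‖e - ξ‖ < 1/2 ∧ z = r • e})
    (ℰ : Set (EuclideanSpace ℝ (Fin d) × EuclideanSpace ℝ (Fin d)))
    (hE : ∀ p ∈ P, ∀ ξ ∈ S, (P ∩ (fun z => p + z) '' Cone ξ).Nonempty →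
      ∃ q ∈ P ∩ (fun z => p + z) '' Cone ξ, (p, q) ∈ ℰ ∧
        ∀ q' ∈ P ∩ (fun z => p + z) '' Cone ξ, dist p q ≤ dist p q')
    (s t : EuclideanSpace ℝ (Fin d)) (hs : s ∈ P) (ht : t ∈ P) (hst : s ≠ t) :
    ∃ F : Finset (EuclideanSpace ℝ (Fin d) × EuclideanSpace ℝ (Fin d)),
      ↑F ⊆ ℰ ∧
      IsConnected (⋃ e ∈ F, segment ℝ e.1 e.2) ∧
      s ∈ ⋃ e ∈ F, segment ℝ e.1 e.2 ∧
      t ∈ ⋃ e ∈ F, segment ℝ e.1 e.2 ∧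
      (⋃ e ∈ F, segment ℝ e.1 e.2) ⊆ closedBall t (dist s t) :=
  spanning_graph_connects_general d P hPfin S hmax Cone hCone ℰ hE s t hs ht hst
end

section
/- Let $0 < n < d$ and let $G(d,n)$ be the Grassmannian of $n$-dimensional linear subspaces of $\mathbb{R}^d$ with metric $d(V_1,V_2) = \|\pi_{V_1} - \pi_{V_2}\|$ (operator norm of the difference of the orthogonal projections). Let $W_1, W_2 \in G(d,n+1)$ and $V_1 \in G(d,n)$ with $V_1 \subset W_1$. Then there exists $V_2 \in G(d,n)$ with $V_2 \subset W_2$ and $d(V_1, V_2) \lesssim_d d(W_1, W_2)$. -/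
noncomputable def projL {d : ℕ} (V : Submodule ℝ (EuclideanSpace ℝ (Fin d))) :
    EuclideanSpace ℝ (Fin d) →L[ℝ] EuclideanSpace ℝ (Fin d) :=
  V.subtypeL.comp (V.orthogonalProjectionOnto)

/-!
Put `δ = ‖π_{W₁} - π_{W₂}‖`. Every `x ∈ V₁ ⊆ W₁` satisfies `‖x - π_{W₂} x‖ ≤ δ ‖x‖`, so for
`δ ≤ 1/2` the projection `π_{W₂}` is injective on `V₁` and `V₂ = π_{W₂} V₁` is an `n`-plane of
`W₂` with each of `V₁`, `V₂` within relative distance `2δ` of the other. The identity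
`p - q = (1 - q) p - ((1 - p) q)⋆` for self-adjoint `p, q` turns these one-sided estimates into
`‖π_{V₁} - π_{V₂}‖ ≤ 3δ`. For `δ ≥ 1/2` any `n`-plane of `W₂` works, as a difference of two
projections has norm at most `2 ≤ 4δ`.
-/
open Submodule Module

lemma IsSelfAdjoint.norm_sub_le_norm_one_sub_mul_add {A : Type*} [NormedRing A] [StarRing A]
    [NormedStarGroup A] {p q : A} (hp : IsSelfAdjoint p) (hq : IsSelfAdjoint q) :
    ‖p - q‖ ≤ ‖(1 - q) * p‖ + ‖(1 - p) * q‖ := by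
  have hstar : star ((1 - p) * q) = q * (1 - p) := by simp [star_mul, hp.star_eq, hq.star_eq]
  calc ‖p - q‖ = ‖(1 - q) * p - star ((1 - p) * q)‖ := by rw [hstar]; noncomm_ring
    _ ≤ ‖(1 - q) * p‖ + ‖star ((1 - p) * q)‖ := norm_sub_le _ _
    _ = ‖(1 - q) * p‖ + ‖(1 - p) * q‖ := by rw [norm_star]

lemma Submodule.exists_le_finrank_eq {K V : Type*} [DivisionRing K] [AddCommGroup V] [Module K V]
    (W : Submodule K V) {n : ℕ} (hn : n ≤ finrank K W) :
    ∃ U ≤ W, finrank K U = n := by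
  obtain ⟨f, hf⟩ := exists_linearIndependent_of_le_finrank hn
  refine ⟨(span K (Set.range f)).map W.subtype, map_subtype_le _ _, ?_⟩
  rw [finrank_map_subtype_eq, finrank_span_eq_card hf, Fintype.card_fin]

namespace Submodule

variable {𝕜 E : Type*} [RCLike 𝕜] [NormedAddCommGroup E] [InnerProductSpace 𝕜 E]

lemma norm_sub_starProjection_le_norm_sub (V : Submodule 𝕜 E) [V.HasOrthogonalProjection]
    (x : E) {w : E} (hw : w ∈ V) : ‖x - V.starProjection x‖ ≤ ‖x - w‖ := by
  rw [starProjection_minimal x]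
  exact ciInf_le ⟨0, fun _ ⟨_, hv⟩ => hv ▸ norm_nonneg _⟩ (⟨w, hw⟩ : V)

lemma norm_one_sub_starProjection_mul_starProjection_le (U V : Submodule 𝕜 E)
    [U.HasOrthogonalProjection] [V.HasOrthogonalProjection] {ε : ℝ} (hε : 0 ≤ ε)
    (h : ∀ u ∈ U, ‖u - V.starProjection u‖ ≤ ε * ‖u‖) :
    ‖(1 - V.starProjection) * U.starProjection‖ ≤ ε :=
  ContinuousLinearMap.opNorm_le_bound _ hε fun x =>
    calc ‖U.starProjection x - V.starProjection (U.starProjection x)‖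
        ≤ ε * ‖U.starProjection x‖ := h _ (U.starProjection_apply_mem x)
      _ ≤ ε * ‖x‖ := by gcongr; exact U.norm_starProjection_apply_le x

lemma norm_starProjection_sub_starProjection_le [CompleteSpace E] (U V : Submodule 𝕜 E)
    [U.HasOrthogonalProjection] [V.HasOrthogonalProjection] {εU εV : ℝ}
    (hεU : 0 ≤ εU) (hεV : 0 ≤ εV)
    (hU : ∀ u ∈ U, ‖u - V.starProjection u‖ ≤ εU * ‖u‖)
    (hV : ∀ v ∈ V, ‖v - U.starProjection v‖ ≤ εV * ‖v‖) :
    ‖U.starProjection - V.starProjection‖ ≤ εU + εV :=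
  ((isSelfAdjoint_starProjection U).norm_sub_le_norm_one_sub_mul_add
    (isSelfAdjoint_starProjection V)).trans <|
    add_le_add (norm_one_sub_starProjection_mul_starProjection_le U V hεU hU)
      (norm_one_sub_starProjection_mul_starProjection_le V U hεV hV)

lemma norm_sub_starProjection_le_of_mem {W₁ W₂ : Submodule 𝕜 E} [W₁.HasOrthogonalProjection]
    [W₂.HasOrthogonalProjection] {x : E} (hx : x ∈ W₁) :
    ‖x - W₂.starProjection x‖ ≤ ‖W₁.starProjection - W₂.starProjection‖ * ‖x‖ := by
  simpa [starProjection_eq_self_iff.mpr hx] using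
    (W₁.starProjection - W₂.starProjection).le_opNorm x

variable {V W : Submodule 𝕜 E} [W.HasOrthogonalProjection] {δ : ℝ}

lemma finrank_map_starProjection (hδ : δ < 1)
    (h : ∀ x ∈ V, ‖x - W.starProjection x‖ ≤ δ * ‖x‖) :
    finrank 𝕜 (V.map W.starProjection.toLinearMap) = finrank 𝕜 V := by
  have hinj : Function.Injective ((W.starProjection : E →ₗ[𝕜] E) ∘ₗ V.subtype) := by
    rw [← LinearMap.ker_eq_bot, LinearMap.ker_eq_bot']
    intro x hx
    have hle : ‖(x : E)‖ ≤ δ * ‖(x : E)‖ := by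
      simpa [show W.starProjection x = 0 from hx] using h x x.2
    ext1
    exact norm_eq_zero.mp (by nlinarith [norm_nonneg (x : E)])
  rw [← LinearMap.finrank_range_of_inj hinj, LinearMap.range_comp, range_subtype]

lemma norm_starProjection_sub_starProjection_map_le [CompleteSpace E]
    [V.HasOrthogonalProjection] [(V.map W.starProjection.toLinearMap).HasOrthogonalProjection]
    (hδ₀ : 0 ≤ δ) (hδ : δ ≤ 1 / 2) (h : ∀ x ∈ V, ‖x - W.starProjection x‖ ≤ δ * ‖x‖) :
    ‖V.starProjection - (V.map W.starProjection.toLinearMap).starProjection‖ ≤ 3 * δ := by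
  have hV_near : ∀ u ∈ V, ‖u - (V.map W.starProjection.toLinearMap).starProjection u‖ ≤ δ * ‖u‖ :=
    fun u hu => (norm_sub_starProjection_le_norm_sub _ u (mem_map_of_mem hu)).trans (h u hu)
  have hmap_near : ∀ v ∈ V.map W.starProjection.toLinearMap,
      ‖v - V.starProjection v‖ ≤ 2 * δ * ‖v‖ := by
    rintro _ ⟨u, hu, rfl⟩
    have hu_le : ‖u‖ ≤ 2 * ‖W.starProjection u‖ := by
      have := (norm_le_norm_add_norm_sub' u (W.starProjection u)).trans
        (add_le_add_right (h u hu) _)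
      nlinarith [norm_nonneg u]
    calc ‖W.starProjection u - V.starProjection (W.starProjection u)‖
        ≤ ‖W.starProjection u - u‖ := norm_sub_starProjection_le_norm_sub V _ hu
      _ ≤ δ * ‖u‖ := by rw [norm_sub_rev]; exact h u hu
      _ ≤ δ * (2 * ‖W.starProjection u‖) := by gcongr
      _ = 2 * δ * ‖W.starProjection u‖ := by ring
  linarith [norm_starProjection_sub_starProjection_le V _ hδ₀ (by positivity) hV_near hmap_near]

end Submodule

theorem grassmannian_plane_transfer_general (d n : ℕ) :
    ∃ C : ℝ, 0 < C ∧
      ∀ W₁ W₂ V₁ : Submodule ℝ (EuclideanSpace ℝ (Fin d)),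
        Module.finrank ℝ W₁ = n + 1 → Module.finrank ℝ W₂ = n + 1 →
        Module.finrank ℝ V₁ = n → V₁ ≤ W₁ →
        ∃ V₂ : Submodule ℝ (EuclideanSpace ℝ (Fin d)),
          V₂ ≤ W₂ ∧ Module.finrank ℝ V₂ = n ∧
          ‖projL V₁ - projL V₂‖ ≤ C * ‖projL W₁ - projL W₂‖ := by
  refine ⟨4, by norm_num, fun W₁ W₂ V₁ _ hW₂ hV₁ hV₁W₁ => ?_⟩
  change ∃ V₂, V₂ ≤ W₂ ∧ finrank ℝ V₂ = n ∧
    ‖V₁.starProjection - V₂.starProjection‖ ≤ 4 * ‖W₁.starProjection - W₂.starProjection‖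
  set δ := ‖W₁.starProjection - W₂.starProjection‖
  have hV₁_near : ∀ x ∈ V₁, ‖x - W₂.starProjection x‖ ≤ δ * ‖x‖ := fun x hx =>
    norm_sub_starProjection_le_of_mem (hV₁W₁ hx)
  rcases le_or_gt δ (1 / 2) with hsmall | hlarge
  · refine ⟨V₁.map W₂.starProjection.toLinearMap, ?_, ?_, ?_⟩
    · exact LinearMap.map_le_range.trans (range_starProjection W₂).le
    · rw [finrank_map_starProjection (by linarith) hV₁_near, hV₁]
    · have hδ₀ : 0 ≤ δ := norm_nonneg _
      linarith [norm_starProjection_sub_starProjection_map_le hδ₀ hsmall hV₁_near]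
  · obtain ⟨V₂, hV₂W₂, hV₂⟩ := W₂.exists_le_finrank_eq (n := n) (by omega)
    refine ⟨V₂, hV₂W₂, hV₂, ?_⟩
    calc ‖V₁.starProjection - V₂.starProjection‖
        ≤ ‖V₁.starProjection‖ + ‖V₂.starProjection‖ := norm_sub_le _ _
      _ ≤ 1 + 1 := add_le_add (starProjection_norm_le V₁) (starProjection_norm_le V₂)
      _ ≤ 4 * δ := by linarith

/-- Let `0 < n < d`, `W₁, W₂ ∈ G(d,n+1)` and `V₁ ∈ G(d,n)` with `V₁ ⊆ W₁`.
Then there exists `V₂ ∈ G(d,n)` with `V₂ ⊆ W₂` and `d(V₁,V₂) ≲_d d(W₁,W₂)`, where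
`d(V,V') = ‖π_V - π_{V'}‖`. -/
theorem grassmannian_plane_transfer (d n : ℕ) (hn : 0 < n) (hnd : n < d) :
    ∃ C : ℝ, 0 < C ∧
      ∀ W₁ W₂ V₁ : Submodule ℝ (EuclideanSpace ℝ (Fin d)),
        Module.finrank ℝ W₁ = n + 1 → Module.finrank ℝ W₂ = n + 1 →
        Module.finrank ℝ V₁ = n → V₁ ≤ W₁ →
        ∃ V₂ : Submodule ℝ (EuclideanSpace ℝ (Fin d)),
          V₂ ≤ W₂ ∧ Module.finrank ℝ V₂ = n ∧
          ‖projL V₁ - projL V₂‖ ≤ C * ‖projL W₁ - projL W₂‖ :=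
  grassmannian_plane_transfer_general d n
end

section
/- Let $E \subset \mathbb{R}^d$ be an $n$-regular set with a system $\mathcal{D}$ of dyadic cubes, and let $\mu = \mathcal{H}^n|_E$. Suppose that for every $\epsilon > 0$ there exists $N = N(\epsilon) \in \mathbb{N}$ such that for all $Q \in \mathcal{D}$: $\mu(\{x \in Q : \#\{Q' \in \mathcal{D} : x \in Q' \subset Q,\ \beta(Q') \ge \epsilon\} \ge N\}) \le \tfrac{1}{2}\mu(Q)$. Then for all $\epsilon > 0$ and $Q_0 \in \mathcal{D}$: $\sum_{Q \subset Q_0, \beta(Q) \ge \epsilon} \mu(Q) \le 2N(\epsilon)\, \mu(Q_0)$ (i.e. $E$ satisfies the weak geometric lemma). -/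
open MeasureTheory Metric
open scoped ENNReal

/-- A system of Christ–David "dyadic cubes" on a set `E ⊆ ℝ^d`. A cube is recorded together
with its generation `j ∈ ℤ`; its side-length is `2^{-j}`. -/
structure DyadicSystem (d : ℕ) (E : Set (EuclideanSpace ℝ (Fin d))) where
  cubes : Set (ℤ × Set (EuclideanSpace ℝ (Fin d)))
  center : ℤ × Set (EuclideanSpace ℝ (Fin d)) → EuclideanSpace ℝ (Fin d)
  levels : Set ℤ
  levels_nonempty : levels.Nonempty
  levels_succ : ∀ j ∈ levels, j + 1 ∈ levels
  mem_levels : ∀ Q ∈ cubes, Q.1 ∈ levels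
  exists_cube : ∀ j ∈ levels, ∀ x ∈ E, ∃ Q ∈ cubes, Q.1 = j ∧ x ∈ Q.2
  subset_E : ∀ Q ∈ cubes, Q.2 ⊆ E
  nonempty : ∀ Q ∈ cubes, Q.2.Nonempty
  measurable : ∀ Q ∈ cubes, MeasurableSet Q.2
  disjoint_level : ∀ Q ∈ cubes, ∀ Q' ∈ cubes, Q.1 = Q'.1 → Q ≠ Q' → Disjoint Q.2 Q'.2
  nested : ∀ Q ∈ cubes, ∀ Q' ∈ cubes, Q.1 ≤ Q'.1 → Q'.2 ⊆ Q.2 ∨ Disjoint Q.2 Q'.2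
  cSmall : ℝ
  cBig : ℝ
  cSmall_pos : 0 < cSmall
  cSmall_le_cBig : cSmall ≤ cBig
  center_mem : ∀ Q ∈ cubes, center Q ∈ Q.2
  inner_ball : ∀ Q ∈ cubes, E ∩ ball (center Q) (cSmall * (2:ℝ) ^ (-Q.1)) ⊆ Q.2
  outer_ball : ∀ Q ∈ cubes, Q.2 ⊆ ball (center Q) (cBig * (2:ℝ) ^ (-Q.1))
  ball_mono : ∀ Q ∈ cubes, ∀ Q' ∈ cubes, Q.2 ⊆ Q'.2 →
    closedBall (center Q) (cBig * (2:ℝ) ^ (-Q.1)) ⊆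
      closedBall (center Q') (cBig * (2:ℝ) ^ (-Q'.1))

/-!
Fix a finite family `G` of bad cubes inside `Q₀`. The cubes of `G` through a point form a chain
ordered by generation, so the number of strict ancestors in `G` (the depth) ranks them, and cubes
of equal depth are disjoint. A point of a cube of depth `k + N` lies in at least `N` cubes of `G`
inside its depth-`k` ancestor, so by hypothesis the layer of depth `k + N` has at most half the
measure of the layer of depth `k`. Hence the sum `S` of the layer measures satisfies
`S ≤ N μ(Q₀) + S / 2`, which is finite because bounded parts of a regular set have finite measure.
-/

open scoped Finset Topology

theorem ENNReal.sum_range_le_of_le_half {a : ℕ → ℝ≥0∞} {c : ℝ≥0∞} (N M : ℕ) (hc : c ≠ ∞)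
    (hle : ∀ k, a k ≤ c) (hhalf : ∀ k, a (k + N) ≤ a k / 2) :
    ∑ k ∈ Finset.range M, a k ≤ 2 * N * c := by
  set S := ∑ k ∈ Finset.range M, a k
  have hS : S ≠ ∞ := ENNReal.sum_ne_top.2 fun k _ => ne_top_of_le_ne_top hc (hle k)
  -- `S ≤ N c + S / 2`, with `S` split into halves so that `S / 2` can be cancelled.
  have hrec : S / 2 + S / 2 ≤ N * c + S / 2 := calc
    S / 2 + S / 2 = S := ENNReal.add_halves S
    _ ≤ ∑ k ∈ Finset.range (N + M), a k := Finset.sum_le_sum_of_subset (by gcongr; omega)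
    _ = ∑ k ∈ Finset.range N, a k + ∑ k ∈ Finset.range M, a (k + N) := by
      rw [Finset.sum_range_add]; simp only [add_comm N]
    _ ≤ N * c + ∑ k ∈ Finset.range M, a k / 2 := by
      gcongr with k
      · simpa using Finset.sum_le_card_nsmul (Finset.range N) a c fun k _ => hle k
      · exact hhalf k
    _ = N * c + S / 2 := by simp only [S, div_eq_mul_inv, Finset.sum_mul]
  calc S = 2 * (S / 2) := (ENNReal.mul_div_cancel two_ne_zero ENNReal.ofNat_ne_top).symm
    _ ≤ 2 * (N * c) := by
      gcongr; exact ENNReal.le_of_add_le_add_right (ENNReal.div_ne_top hS two_ne_zero) hrec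
    _ = 2 * N * c := (mul_assoc _ _ _).symm

section NestedFamily

open scoped Classical

variable {α ι κ : Type*} [LinearOrder κ]

structure IsNestedFamily (G : Finset ι) (s : ι → Set α) (g : ι → κ) : Prop where
  subset_of_le : ∀ i ∈ G, ∀ j ∈ G, ∀ x ∈ s i, x ∈ s j → g i ≤ g j → s j ⊆ s i
  eq_of_eq : ∀ i ∈ G, ∀ j ∈ G, ∀ x ∈ s i, x ∈ s j → g i = g j → i = j

noncomputable def nestedDepth (G : Finset ι) (s : ι → Set α) (g : ι → κ) (i : ι) : ℕ :=
  #{j ∈ G | g j < g i ∧ s i ⊆ s j}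

noncomputable def nestedLayer (G : Finset ι) (s : ι → Set α) (g : ι → κ) (k : ℕ) : Set α :=
  ⋃ i ∈ {i ∈ G | nestedDepth G s g i = k}, s i

variable {G : Finset ι} {s : ι → Set α} {g : ι → κ} {x : α} {i j : ι}

lemma nestedDepth_lt_card (hi : i ∈ G) : nestedDepth G s g i < #G :=
  Finset.card_lt_card (Finset.filter_ssubset.2 ⟨i, hi, fun h => h.1.false⟩)

namespace IsNestedFamily

lemma nestedDepth_eq (h : IsNestedFamily G s g) (hi : i ∈ G) (hx : x ∈ s i) :
    nestedDepth G s g i = #{j ∈ {j ∈ G | x ∈ s j} | g j < g i} := by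
  rw [nestedDepth, Finset.filter_filter]
  refine congrArg Finset.card (Finset.filter_congr fun j hj => ?_)
  exact ⟨fun ⟨hlt, hsub⟩ => ⟨hsub hx, hlt⟩,
    fun ⟨hxj, hlt⟩ => ⟨hlt, h.subset_of_le j hj i hi x hxj hx hlt.le⟩⟩

lemma nestedDepth_lt_card_filter_mem (h : IsNestedFamily G s g) (hi : i ∈ G) (hx : x ∈ s i) :
    nestedDepth G s g i < #{j ∈ G | x ∈ s j} := by
  rw [h.nestedDepth_eq hi hx]
  exact Finset.card_lt_card (Finset.filter_ssubset.2 ⟨i, Finset.mem_filter.2 ⟨hi, hx⟩, lt_irrefl _⟩)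

lemma nestedDepth_lt_nestedDepth (h : IsNestedFamily G s g) (hi : i ∈ G) (hj : j ∈ G)
    (hxi : x ∈ s i) (hxj : x ∈ s j) (hij : g i < g j) :
    nestedDepth G s g i < nestedDepth G s g j := by
  rw [h.nestedDepth_eq hi hxi, h.nestedDepth_eq hj hxj]
  refine Finset.card_lt_card ⟨fun k hk => ?_, fun hsub => ?_⟩
  · rw [Finset.mem_filter] at hk ⊢
    exact ⟨hk.1, hk.2.trans hij⟩
  · have := hsub (Finset.mem_filter.2 ⟨Finset.mem_filter.2 ⟨hi, hxi⟩, hij⟩)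
    exact lt_irrefl _ (Finset.mem_filter.1 this).2

lemma nestedDepth_injOn (h : IsNestedFamily G s g) (x : α) :
    Set.InjOn (nestedDepth G s g) ↑{j ∈ G | x ∈ s j} := by
  intro i hi j hj hij
  rw [Finset.mem_coe, Finset.mem_filter] at hi hj
  rcases lt_trichotomy (g i) (g j) with hlt | heq | hgt
  · exact absurd hij (h.nestedDepth_lt_nestedDepth hi.1 hj.1 hi.2 hj.2 hlt).ne
  · exact h.eq_of_eq i hi.1 j hj.1 x hi.2 hj.2 heq
  · exact absurd hij (h.nestedDepth_lt_nestedDepth hj.1 hi.1 hj.2 hi.2 hgt).ne'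

lemma exists_nestedDepth_eq (h : IsNestedFamily G s g) {k : ℕ}
    (hk : k < #{j ∈ G | x ∈ s j}) : ∃ i ∈ G, x ∈ s i ∧ nestedDepth G s g i = k := by
  obtain ⟨i, hi, rfl⟩ := Finset.surj_on_of_inj_on_of_card_le (fun i _ => nestedDepth G s g i)
    (fun i hi => Finset.mem_range.2
      (h.nestedDepth_lt_card_filter_mem (Finset.mem_filter.1 hi).1 (Finset.mem_filter.1 hi).2))
    (fun i j hi hj hij => h.nestedDepth_injOn x hi hj hij)
    (by simp) k (Finset.mem_range.2 hk)
  exact ⟨i, (Finset.mem_filter.1 hi).1, (Finset.mem_filter.1 hi).2, rfl⟩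

lemma pairwiseDisjoint_nestedDepth_eq (h : IsNestedFamily G s g) (k : ℕ) :
    (↑{i ∈ G | nestedDepth G s g i = k} : Set ι).PairwiseDisjoint s := by
  intro i hi j hj hne
  rw [Finset.mem_coe, Finset.mem_filter] at hi hj
  refine Set.disjoint_left.2 fun x hxi hxj => hne ?_
  exact h.nestedDepth_injOn x (Finset.mem_filter.2 ⟨hi.1, hxi⟩) (Finset.mem_filter.2 ⟨hj.1, hxj⟩)
    (hi.2.trans hj.2.symm)

lemma nestedLayer_add_subset (h : IsNestedFamily G s g) (k N : ℕ) :
    nestedLayer G s g (k + N) ⊆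
      ⋃ i ∈ {i ∈ G | nestedDepth G s g i = k}, {x ∈ s i | N ≤ #{j ∈ G | x ∈ s j ∧ s j ⊆ s i}} := by
  intro x hx
  simp only [nestedLayer, Set.mem_iUnion, Finset.mem_filter, exists_prop] at hx
  obtain ⟨j, ⟨hj, hdj⟩, hxj⟩ := hx
  have hlt := h.nestedDepth_lt_card_filter_mem hj hxj
  obtain ⟨i, hi, hxi, hdi⟩ := h.exists_nestedDepth_eq (x := x) (k := k) (by omega)
  refine Set.mem_biUnion (Finset.mem_filter.2 ⟨hi, hdi⟩) ⟨hxi, ?_⟩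
  -- At least `k + N + 1` members of `G` contain `x`, and exactly `k` of them lie above `i`.
  have hsplit := Finset.card_filter_add_card_filter_not (s := {j ∈ G | x ∈ s j}) (g · < g i)
  rw [← h.nestedDepth_eq hi hxi, hdi] at hsplit
  calc N ≤ #{j ∈ {j ∈ G | x ∈ s j} | ¬ g j < g i} := by omega
    _ ≤ #{j ∈ G | x ∈ s j ∧ s j ⊆ s i} := by
      refine Finset.card_le_card fun j' hj' => ?_
      simp only [Finset.mem_filter, not_lt] at hj' ⊢
      exact ⟨hj'.1.1, hj'.1.2, h.subset_of_le i hi j' hj'.1.1 x hxi hj'.1.2 hj'.2⟩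

variable [MeasurableSpace α] {μ : Measure α}

lemma measure_nestedLayer (h : IsNestedFamily G s g) (hs : ∀ i ∈ G, MeasurableSet (s i))
    (k : ℕ) : μ (nestedLayer G s g k) = ∑ i ∈ {i ∈ G | nestedDepth G s g i = k}, μ (s i) :=
  measure_biUnion_finset (h.pairwiseDisjoint_nestedDepth_eq k)
    fun i hi => hs i (Finset.mem_filter.1 hi).1

lemma sum_measure_eq_sum_measure_nestedLayer (h : IsNestedFamily G s g)
    (hs : ∀ i ∈ G, MeasurableSet (s i)) :
    ∑ i ∈ G, μ (s i) = ∑ k ∈ Finset.range #G, μ (nestedLayer G s g k) := by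
  simp only [h.measure_nestedLayer hs]
  exact (Finset.sum_fiberwise_of_maps_to
    (fun i hi => Finset.mem_range.2 (nestedDepth_lt_card hi)) _).symm

lemma measure_nestedLayer_add_le (h : IsNestedFamily G s g) (hs : ∀ i ∈ G, MeasurableSet (s i))
    {N : ℕ} (hhalf : ∀ i ∈ G, μ {x ∈ s i | N ≤ #{j ∈ G | x ∈ s j ∧ s j ⊆ s i}} ≤ μ (s i) / 2)
    (k : ℕ) : μ (nestedLayer G s g (k + N)) ≤ μ (nestedLayer G s g k) / 2 := calc
  _ ≤ ∑ i ∈ {i ∈ G | nestedDepth G s g i = k},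
        μ {x ∈ s i | N ≤ #{j ∈ G | x ∈ s j ∧ s j ⊆ s i}} :=
    (measure_mono (h.nestedLayer_add_subset k N)).trans (measure_biUnion_finset_le _ _)
  _ ≤ ∑ i ∈ {i ∈ G | nestedDepth G s g i = k}, μ (s i) / 2 :=
    Finset.sum_le_sum fun i hi => hhalf i (Finset.mem_filter.1 hi).1
  _ = μ (nestedLayer G s g k) / 2 := by
    simp only [h.measure_nestedLayer hs, div_eq_mul_inv, Finset.sum_mul]

theorem sum_measure_le_of_measure_le_half (h : IsNestedFamily G s g)
    (hs : ∀ i ∈ G, MeasurableSet (s i)) (hfin : μ (⋃ i ∈ G, s i) ≠ ∞) {N : ℕ}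
    (hhalf : ∀ i ∈ G, μ {x ∈ s i | N ≤ #{j ∈ G | x ∈ s j ∧ s j ⊆ s i}} ≤ μ (s i) / 2) :
    ∑ i ∈ G, μ (s i) ≤ 2 * N * μ (⋃ i ∈ G, s i) := by
  rw [h.sum_measure_eq_sum_measure_nestedLayer hs]
  refine ENNReal.sum_range_le_of_le_half N #G hfin (fun k => measure_mono ?_)
    (h.measure_nestedLayer_add_le hs hhalf)
  exact Set.biUnion_mono (Finset.filter_subset _ _) fun _ _ => subset_rfl

end IsNestedFamily

end NestedFamily

section Regular

variable {X : Type*} [MetricSpace X] [ProperSpace X] [MeasurableSpace X] [BorelSpace X]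
  {E : Set X} {μ : Measure X}

lemma measure_ne_top_of_isBounded {s : ℝ} (hs : 0 ≤ s) (hE : IsClosed E)
    (hμ : μ = (μH[s]).restrict E)
    (hfin : ∀ x ∈ E, ∀ r : ℝ, 0 < r → ENNReal.ofReal r < ediam E → μ (closedBall x r) ≠ ∞)
    {A : Set X} (hAE : A ⊆ E) (hA : Bornology.IsBounded A) : μ A ≠ ∞ := by
  rcases eq_zero_or_pos (ediam E) with hdiam | hdiam
  · refine ne_top_of_le_ne_top ENNReal.one_ne_top ((measure_mono hAE).trans ?_)
    rw [hμ, Measure.restrict_apply_self]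
    exact Measure.hausdorffMeasure_le_one_of_subsingleton (ediam_eq_zero_iff.1 hdiam) hs
  · obtain ⟨r, -, hr, hrE⟩ := ENNReal.lt_iff_exists_real_btwn.1 hdiam
    have hr : 0 < r := ENNReal.ofReal_pos.1 hr
    have hloc : ∀ x ∈ closure A, μ.FiniteAtFilter (𝓝[closure A] x) := fun x hx =>
      Measure.FiniteAtFilter.filter_mono nhdsWithin_le_nhds
        ⟨closedBall x r, closedBall_mem_nhds x hr,
          (hfin x ((hE.closure_subset_iff.2 hAE) hx) r hr hrE).lt_top⟩
    exact ne_top_of_le_ne_top (hA.isCompact_closure.measure_lt_top_of_nhdsWithin hloc).ne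
      (measure_mono subset_closure)

end Regular

namespace DyadicSystem

variable {d : ℕ} {E : Set (EuclideanSpace ℝ (Fin d))} (𝒟 : DyadicSystem d E)

lemma isBounded_cube {Q : ℤ × Set (EuclideanSpace ℝ (Fin d))} (hQ : Q ∈ 𝒟.cubes) :
    Bornology.IsBounded Q.2 :=
  isBounded_ball.subset (𝒟.outer_ball Q hQ)

lemma isNestedFamily {G : Finset (ℤ × Set (EuclideanSpace ℝ (Fin d)))}
    (hG : ∀ Q ∈ G, Q ∈ 𝒟.cubes) : IsNestedFamily G Prod.snd Prod.fst where
  subset_of_le Q hQ R hR x hxQ hxR hle :=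
    (𝒟.nested Q (hG Q hQ) R (hG R hR) hle).resolve_right
      (Set.not_disjoint_iff.2 ⟨x, hxQ, hxR⟩)
  eq_of_eq Q hQ R hR x hxQ hxR heq := by
    by_contra hne
    exact Set.disjoint_left.1 (𝒟.disjoint_level Q (hG Q hQ) R (hG R hR) heq hne) hxQ hxR

end DyadicSystem

theorem wgl_reformulation_general (d n : ℕ) (C₀ : ℝ)
    (E : Set (EuclideanSpace ℝ (Fin d))) (hEclosed : IsClosed E)
    (μ : Measure (EuclideanSpace ℝ (Fin d))) (hμ : μ = (μH[(n:ℝ)]).restrict E)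
    (hreg : ∀ x ∈ E, ∀ r : ℝ, 0 < r → ENNReal.ofReal r < EMetric.diam E →
      ENNReal.ofReal (C₀⁻¹ * r ^ n) ≤ μ (closedBall x r) ∧
      μ (closedBall x r) ≤ ENNReal.ofReal (C₀ * r ^ n))
    (𝒟 : DyadicSystem d E)
    (β : ℤ × Set (EuclideanSpace ℝ (Fin d)) → ℝ)
    (N : ℝ → ℕ)
    (hN : ∀ ε : ℝ, 0 < ε → ∀ Q ∈ 𝒟.cubes,
      μ {x ∈ Q.2 | ∃ F : Finset (ℤ × Set (EuclideanSpace ℝ (Fin d))),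
          N ε ≤ F.card ∧
          ∀ Q' ∈ F, Q' ∈ 𝒟.cubes ∧ x ∈ Q'.2 ∧ Q'.2 ⊆ Q.2 ∧ ε ≤ β Q'} ≤ μ Q.2 / 2) :
    ∀ ε : ℝ, 0 < ε → ∀ Q₀ ∈ 𝒟.cubes,
      ∑' Q : {Q : ℤ × Set (EuclideanSpace ℝ (Fin d)) //
          Q ∈ 𝒟.cubes ∧ Q.2 ⊆ Q₀.2 ∧ ε ≤ β Q},
        μ (Q : ℤ × Set (EuclideanSpace ℝ (Fin d))).2 ≤
      (2 * N ε : ℕ) * μ Q₀.2 := by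
  classical
  intro ε hε Q₀ hQ₀
  refine ENNReal.summable.tsum_le_of_sum_le fun F => ?_
  set G := F.map (Function.Embedding.subtype _)
  have hG : ∀ Q ∈ G, Q ∈ 𝒟.cubes ∧ Q.2 ⊆ Q₀.2 ∧ ε ≤ β Q := by
    intro Q hQ
    obtain ⟨Q', -, rfl⟩ := Finset.mem_map.1 hQ
    exact Q'.2
  have hunion : ⋃ Q ∈ G, Q.2 ⊆ Q₀.2 := Set.iUnion₂_subset fun Q hQ => (hG Q hQ).2.1
  have hfin : μ (⋃ Q ∈ G, Q.2) ≠ ∞ :=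
    ne_top_of_le_ne_top (measure_ne_top_of_isBounded n.cast_nonneg hEclosed hμ
      (fun x hx r hr hrE => ne_top_of_le_ne_top ENNReal.ofReal_ne_top (hreg x hx r hr hrE).2)
      (𝒟.subset_E Q₀ hQ₀) (𝒟.isBounded_cube hQ₀)) (measure_mono hunion)
  have hhalf : ∀ Q ∈ G, μ {x ∈ Q.2 | N ε ≤ #{R ∈ G | x ∈ R.2 ∧ R.2 ⊆ Q.2}} ≤ μ Q.2 / 2 := by
    refine fun Q hQ => le_trans (measure_mono ?_) (hN ε hε Q (hG Q hQ).1)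
    rintro x ⟨hxQ, hcard⟩
    refine ⟨hxQ, _, hcard, fun R hR => ?_⟩
    obtain ⟨hRG, hxR, hRQ⟩ := Finset.mem_filter.1 hR
    exact ⟨(hG R hRG).1, hxR, hRQ, (hG R hRG).2.2⟩
  calc ∑ Q ∈ F, μ Q.1.2 = ∑ Q ∈ G, μ Q.2 := by rw [Finset.sum_map]; rfl
    _ ≤ 2 * N ε * μ (⋃ Q ∈ G, Q.2) :=
      (𝒟.isNestedFamily fun Q hQ => (hG Q hQ).1).sum_measure_le_of_measure_le_half
        (fun Q hQ => 𝒟.measurable Q (hG Q hQ).1) hfin hhalf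
    _ ≤ (2 * N ε : ℕ) * μ Q₀.2 := by push_cast; gcongr

/-- **reformulation of the weak geometric lemma.** Let `E ⊆ ℝ^d` be an
`n`-regular set with dyadic cubes `𝒟` and `μ = H^n|_E`, and let `β` be any assignment of
coefficients to cubes. Suppose for every `ε > 0` there is `N = N(ε)` such that for each cube
`Q`, the set of points of `Q` lying in at least `N` cubes `Q' ⊆ Q` with `β(Q') ≥ ε` has
measure at most `μ(Q)/2`. Then `∑_{Q ⊆ Q₀, β(Q) ≥ ε} μ(Q) ≤ 2 N(ε) μ(Q₀)` for every `Q₀`;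
i.e. `E` satisfies the weak geometric lemma. -/
theorem wgl_reformulation (d n : ℕ) (C₀ : ℝ) (hC₀ : 1 ≤ C₀)
    (E : Set (EuclideanSpace ℝ (Fin d))) (hEclosed : IsClosed E)
    (μ : Measure (EuclideanSpace ℝ (Fin d))) (hμ : μ = (μH[(n:ℝ)]).restrict E)
    (hreg : ∀ x ∈ E, ∀ r : ℝ, 0 < r → ENNReal.ofReal r < EMetric.diam E →
      ENNReal.ofReal (C₀⁻¹ * r ^ n) ≤ μ (closedBall x r) ∧
      μ (closedBall x r) ≤ ENNReal.ofReal (C₀ * r ^ n))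
    (𝒟 : DyadicSystem d E)
    (β : ℤ × Set (EuclideanSpace ℝ (Fin d)) → ℝ)
    (N : ℝ → ℕ)
    (hN : ∀ ε : ℝ, 0 < ε → ∀ Q ∈ 𝒟.cubes,
      μ {x ∈ Q.2 | ∃ F : Finset (ℤ × Set (EuclideanSpace ℝ (Fin d))),
          N ε ≤ F.card ∧
          ∀ Q' ∈ F, Q' ∈ 𝒟.cubes ∧ x ∈ Q'.2 ∧ Q'.2 ⊆ Q.2 ∧ ε ≤ β Q'} ≤ μ Q.2 / 2) :
    ∀ ε : ℝ, 0 < ε → ∀ Q₀ ∈ 𝒟.cubes,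
      ∑' Q : {Q : ℤ × Set (EuclideanSpace ℝ (Fin d)) //
          Q ∈ 𝒟.cubes ∧ Q.2 ⊆ Q₀.2 ∧ ε ≤ β Q},
        μ (Q : ℤ × Set (EuclideanSpace ℝ (Fin d))).2 ≤
      (2 * N ε : ℕ) * μ Q₀.2 :=
  wgl_reformulation_general d n C₀ E hEclosed μ hμ hreg 𝒟 β N hN
end
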